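/- Let n ≥ 4, let π be a nontrivial partition of {1,…,n} with a block π₁ containing at least two elements a, b, and let c, d be two distinct elements of some block of π with {c,d} ≠ {a,b} and {c,d} ∩ {a,b} = ∅. If c, d ∈ π₁, then the transposition product g = (a c)(b d) stabilizes π and maps the partition ab̄ (block {a,b}, rest singletons) to the partition cd̄ (block {c,d}, rest singletons). -/

import Mathlib

open Equiv

/- Both transpositions move points only inside the block of `a`, so `g` fixes every block
and hence stabilizes `π`; and `g` is a bijection sending `a ↦ c`, `b ↦ d`, so it carries the
pair `{a, b}` to the pair `{c, d}`. -/

namespace Setoid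

variable {α : Type*} (s : Setoid α)

theorem swap_apply_rel [DecidableEq α] {a c : α} (h : s.r a c) (x : α) : s.r (swap a c x) x := by
  rcases eq_or_ne x a with rfl | hxa
  · rw [swap_apply_left]
    exact s.symm h
  rcases eq_or_ne x c with rfl | hxc
  · rw [swap_apply_right]
    exact h
  rw [swap_apply_of_ne_of_ne hxa hxc]

theorem mul_apply_rel {g h : Perm α} (hg : ∀ x, s.r (g x) x) (hh : ∀ x, s.r (h x) x)
    (x : α) : s.r ((g * h) x) x :=
  s.trans (hg (h x)) (hh x)

theorem rel_apply_iff_of_forall_rel {g : Perm α} (hg : ∀ x, s.r (g x) x) (x y : α) :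
    s.r (g x) (g y) ↔ s.r x y :=
  ⟨fun h => s.trans (s.symm (hg x)) (s.trans h (hg y)),
    fun h => s.trans (hg x) (s.trans h (s.symm (hg y)))⟩

end Setoid

/-- The partition `ab̄`, as a relation. -/
def pairRel {α : Type*} (a b x y : α) : Prop :=
  x = y ∨ (x = a ∧ y = b) ∨ (x = b ∧ y = a)

theorem pairRel_apply_iff {α β : Type*} {g : α → β} (hg : Function.Injective g)
    (a b x y : α) : pairRel (g a) (g b) (g x) (g y) ↔ pairRel a b x y := by
  simp only [pairRel, hg.eq_iff]

theorem swap_mul_swap_apply_first {α : Type*} [DecidableEq α] {a b c d : α}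
    (hab : a ≠ b) (hda : d ≠ a) : (swap a c * swap b d) a = c := by
  rw [Perm.mul_apply, swap_apply_of_ne_of_ne hab hda.symm, swap_apply_left]

theorem swap_mul_swap_apply_second {α : Type*} [DecidableEq α] {a b c d : α}
    (hcd : c ≠ d) (hda : d ≠ a) : (swap a c * swap b d) b = d := by
  rw [Perm.mul_apply, swap_apply_left, swap_apply_of_ne_of_ne hda hcd.symm]

theorem stmt_12_general {n : ℕ}
    (π : Setoid (Fin n))
    (a b c d : Fin n) (hab : a ≠ b) (hcd : c ≠ d)
    (hda : d ≠ a)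
    (h1 : π.r a b) (h2 : π.r a c) (h3 : π.r a d) :
    (∀ x y : Fin n,
      π.r ((Equiv.swap a c * Equiv.swap b d) x) ((Equiv.swap a c * Equiv.swap b d) y)
        ↔ π.r x y) ∧
    (∀ x y : Fin n,
      (x = y ∨ (x = a ∧ y = b) ∨ (x = b ∧ y = a)) ↔
      ((Equiv.swap a c * Equiv.swap b d) x = (Equiv.swap a c * Equiv.swap b d) y ∨
        ((Equiv.swap a c * Equiv.swap b d) x = c ∧ (Equiv.swap a c * Equiv.swap b d) y = d) ∨
        ((Equiv.swap a c * Equiv.swap b d) x = d ∧ (Equiv.swap a c * Equiv.swap b d) y = c))) := by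
  have hbd : π.r b d := π.trans (π.symm h1) h3
  have moves_within_blocks : ∀ x, π.r ((swap a c * swap b d) x) x :=
    π.mul_apply_rel (π.swap_apply_rel h2) (π.swap_apply_rel hbd)
  refine ⟨π.rel_apply_iff_of_forall_rel moves_within_blocks, fun x y => ?_⟩
  have hpair := pairRel_apply_iff (swap a c * swap b d).injective a b x y
  rw [swap_mul_swap_apply_first hab hda, swap_mul_swap_apply_second hcd hda] at hpair
  exact hpair.symm

theorem stmt_12 {n : ℕ} (hn : 4 ≤ n)
    (π : Setoid (Fin n)) (hπ : π ≠ ⊤)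
    (a b c d : Fin n) (hab : a ≠ b) (hcd : c ≠ d)
    (hca : c ≠ a) (hcb : c ≠ b) (hda : d ≠ a) (hdb : d ≠ b)
    (h1 : π.r a b) (h2 : π.r a c) (h3 : π.r a d) :
    (∀ x y : Fin n,
      π.r ((Equiv.swap a c * Equiv.swap b d) x) ((Equiv.swap a c * Equiv.swap b d) y)
        ↔ π.r x y) ∧
    (∀ x y : Fin n,
      (x = y ∨ (x = a ∧ y = b) ∨ (x = b ∧ y = a)) ↔
      ((Equiv.swap a c * Equiv.swap b d) x = (Equiv.swap a c * Equiv.swap b d) y ∨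
        ((Equiv.swap a c * Equiv.swap b d) x = c ∧ (Equiv.swap a c * Equiv.swap b d) y = d) ∨
        ((Equiv.swap a c * Equiv.swap b d) x = d ∧ (Equiv.swap a c * Equiv.swap b d) y = c))) :=
  stmt_12_general π a b c d hab hcd hda h1 h2 h3
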